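/- If h : Y → Y' is a fibrewise map admitting a left fibrewise homotopy inverse (h' : Y' → Y with h'∘h ≃_B id_Y), then D_B(h∘f_1,...,h∘f_r) = D_B(f_1,...,f_r) for fibrewise maps f_1,...,f_r : X → Y over B. -/
import Mathlib


open Set

/-- Two continuous maps are fibrewise homotopic over `B`: there is a homotopy
whose every time-slice commutes with the projections to `B`. -/
def FibHomotopic {B X Y : Type*} [TopologicalSpace B] [TopologicalSpace X] [TopologicalSpace Y]
    (pX : X → B) (pY : Y → B) (f g : C(X, Y)) : Prop :=
  ∃ H : f.Homotopy g, ∀ (x : X) (t : unitInterval), pY (H (t, x)) = pX x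

/-- Sequential parametrized homotopic distance of a family of fibrewise maps:
the least `n` such that `X` admits an open cover by `n + 1` open sets on each of
which all the maps are pairwise fibrewise homotopic (`∞` if none exists). -/
noncomputable def fibDist {B X Y ι : Type*} [TopologicalSpace B] [TopologicalSpace X]
    [TopologicalSpace Y] (pX : X → B) (pY : Y → B) (f : ι → C(X, Y)) : ℕ∞ :=
  sInf {n : ℕ∞ | ∃ k : ℕ, (k : ℕ∞) = n ∧ ∃ U : Fin (k + 1) → Set X,
    (∀ i, IsOpen (U i)) ∧ (⋃ i, U i) = Set.univ ∧
    ∀ i s t, FibHomotopic (fun x : U i => pX (x : X)) pY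
      ((f s).restrict (U i)) ((f t).restrict (U i))}

lemma FibHomotopic.symm' {B X Y : Type*} [TopologicalSpace B] [TopologicalSpace X]
    [TopologicalSpace Y] {pX : X → B} {pY : Y → B} {f g : C(X, Y)}
    (H : FibHomotopic pX pY f g) : FibHomotopic pX pY g f := by
  obtain ⟨H, hH⟩ := H
  refine ⟨H.symm, fun x t => ?_⟩
  exact hH x _

lemma FibHomotopic.trans' {B X Y : Type*} [TopologicalSpace B] [TopologicalSpace X]
    [TopologicalSpace Y] {pX : X → B} {pY : Y → B} {f g k : C(X, Y)}
    (H : FibHomotopic pX pY f g) (G : FibHomotopic pX pY g k) : FibHomotopic pX pY f k := by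
  obtain ⟨H, hH⟩ := H
  obtain ⟨G, hG⟩ := G
  refine ⟨H.trans G, fun x t => ?_⟩
  rw [ContinuousMap.Homotopy.trans_apply]
  split_ifs
  · exact hH x _
  · exact hG x _

/-- Postcomposition with a fibrewise map preserves fibrewise homotopy. -/
lemma FibHomotopic.postcomp {B X Y Y' : Type*} [TopologicalSpace B] [TopologicalSpace X]
    [TopologicalSpace Y] [TopologicalSpace Y'] {pX : X → B} {pY : Y → B} {pY' : Y' → B}
    {f g : C(X, Y)} (H : FibHomotopic pX pY f g) (h : C(Y, Y')) (hh : ∀ y, pY' (h y) = pY y) :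
    FibHomotopic pX pY' (h.comp f) (h.comp g) := by
  obtain ⟨H, hH⟩ := H
  refine ⟨⟨h.comp H.toContinuousMap, by simp, by simp⟩, fun x t => ?_⟩
  show pY' (h (H (t, x))) = pX x
  rw [hh, hH]

/-- Precomposing a fibrewise homotopy with a fibrewise map. -/
lemma FibHomotopic.precomp {B X Y Z : Type*} [TopologicalSpace B] [TopologicalSpace X]
    [TopologicalSpace Y] [TopologicalSpace Z] {pX : X → B} {pY : Y → B} {pZ : Z → B}
    {f g : C(Y, Z)} (H : FibHomotopic pY pZ f g) (k : C(X, Y)) (hk : ∀ x, pY (k x) = pX x) :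
    FibHomotopic pX pZ (f.comp k) (g.comp k) := by
  obtain ⟨H, hH⟩ := H
  refine ⟨⟨⟨fun p => H (p.1, k p.2), by continuity⟩, by simp, by simp⟩, fun x t => ?_⟩
  show pZ (H (t, k x)) = pX x
  rw [hH, hk]

lemma restrict_comp {X Y Z : Type*} [TopologicalSpace X] [TopologicalSpace Y]
    [TopologicalSpace Z] (g : C(Y, Z)) (f : C(X, Y)) (U : Set X) :
    (g.comp f).restrict U = g.comp (f.restrict U) := rfl

/-- Postcomposition with a fibrewise map admitting a left fibrewise homotopy inverse
preserves the sequential parametrized homotopic distance. -/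
theorem stmt10 {B X Y Y' : Type*} [TopologicalSpace B] [TopologicalSpace X] [TopologicalSpace Y]
    [TopologicalSpace Y'] (pX : X → B) (pY : Y → B) (pY' : Y' → B)
    (hpX : Continuous pX) (hpY : Continuous pY) (hpY' : Continuous pY')
    (r : ℕ) (f : Fin r → C(X, Y)) (hf : ∀ i x, pY (f i x) = pX x)
    (h : C(Y, Y')) (hh : ∀ y, pY' (h y) = pY y)
    (h' : C(Y', Y)) (hh' : ∀ y, pY (h' y) = pY' y)
    (hinv : FibHomotopic pY pY (h'.comp h) (ContinuousMap.id Y)) :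
    fibDist pX pY' (fun i => h.comp (f i)) = fibDist pX pY f := by
  unfold fibDist
  congr 1
  ext n
  constructor
  · rintro ⟨k, hk, U, hUo, hUc, hUh⟩
    refine ⟨k, hk, U, hUo, hUc, fun i s t => ?_⟩
    -- from homotopy of h∘f's, recover homotopy of f's using left inverse h'
    have key : ∀ s : Fin r, FibHomotopic (fun x : U i => pX (x : X)) pY
        (((h'.comp h).comp (f s)).restrict (U i)) ((f s).restrict (U i)) := by
      intro s
      rw [restrict_comp]
      have := hinv.precomp ((f s).restrict (U i)) (fun x => hf s x)
      simpa using this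
    have mid : FibHomotopic (fun x : U i => pX (x : X)) pY
        (((h'.comp h).comp (f s)).restrict (U i)) (((h'.comp h).comp (f t)).restrict (U i)) := by
      have := (hUh i s t).postcomp h' hh'
      rw [restrict_comp, restrict_comp] at this ⊢
      rw [ContinuousMap.comp_assoc, ContinuousMap.comp_assoc]
      exact this
    exact ((key s).symm'.trans' mid).trans' (key t)
  · rintro ⟨k, hk, U, hUo, hUc, hUh⟩
    refine ⟨k, hk, U, hUo, hUc, fun i s t => ?_⟩
    have := (hUh i s t).postcomp h hh
    rw [restrict_comp, restrict_comp]
    exact this
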